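/- arXiv:0905.4651 — 2 statements merged into one kernel-verified Lean document; each statement's English description precedes it below -/
import Mathlib

section
/- The torus generated by b₁ and b₄ acts transitively on the projectivized BPS set: for all v, w ∈ B there exist a, b ∈ ℝ and λ ∈ ℝ with λ ≠ 0 such that exp(a·b₁)·exp(b·b₄)·v = λ·w. -/
/-!
Identify `ℝ⁴` with `ℂ²` through `v ↦ (m + n i, q + h i)`. Since `b₁² = b₄² = -1`, each exponential
is `cos t + sin t • bᵢ`, and `exp (a • b₁) * exp (b • b₄)` acts as
`(z₁, z₂) ↦ (e^{i(a - b)} z₁, e^{-i(a + b)} z₂)`; as `(a - b, -(a + b))` ranges over all of `ℝ²`,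
the torus is the full product of the two rotation groups. On `B` the two components have the
same nonzero modulus, so rotating each component of `v` onto the direction of the corresponding
component of `w` multiplies `w` by the same factor `|z₁(v)| / |z₁(w)|` in both planes.
-/

open Matrix NormedSpace

noncomputable section

def b1 : Matrix (Fin 4) (Fin 4) ℝ := !![0,-1,0,0; 1,0,0,0; 0,0,0,1; 0,0,-1,0]
def b4 : Matrix (Fin 4) (Fin 4) ℝ := !![0,1,0,0; -1,0,0,0; 0,0,0,1; 0,0,-1,0]

/-- The quadratic form `Δ²(m,n,q,h) = m² + n² − q² − h²`. -/
def Δsq (v : Fin 4 → ℝ) : ℝ := v 0 ^ 2 + v 1 ^ 2 - v 2 ^ 2 - v 3 ^ 2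

/-- The set of single-centered BPS charge vectors. -/
def B : Set (Fin 4 → ℝ) := {v | v ≠ 0 ∧ Δsq v = 0}

theorem exp_smul_of_mul_self_eq_neg_one {A : Type*} [NormedRing A] [NormedAlgebra ℝ A]
    [Algebra ℚ A] {J : A} (hJ : J * J = -1) (t : ℝ) :
    exp (t • J) = Real.cos t • 1 + Real.sin t • J := by
  let f : ℂ →ₐ[ℝ] A := Complex.liftAux J hJ
  have hf : Continuous f := f.toLinearMap.continuous_of_finiteDimensional
  have hI : f (t * Complex.I) = t • J := by
    rw [← Complex.real_smul, map_smul, Complex.liftAux_apply_I]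
  rw [← hI, ← map_exp f hf, ← Complex.exp_eq_exp_ℂ, Complex.exp_mul_I, Complex.liftAux_apply]
  simp [Algebra.algebraMap_eq_smul_one, ← Complex.ofReal_cos, ← Complex.ofReal_sin]

theorem Matrix.exp_smul_of_mul_self_eq_neg_one {n : Type*} [Fintype n] [DecidableEq n]
    {J : Matrix n n ℝ} (hJ : J * J = -1) (t : ℝ) :
    exp (t • J) = Real.cos t • 1 + Real.sin t • J := by
  let _ : NormedRing (Matrix n n ℝ) := Matrix.linftyOpNormedRing
  let _ : NormedAlgebra ℝ (Matrix n n ℝ) := Matrix.linftyOpNormedAlgebra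
  exact _root_.exp_smul_of_mul_self_eq_neg_one hJ t

theorem Complex.exists_exp_mul_I_mul_eq {z w : ℂ} (hw : w ≠ 0) :
    ∃ θ : ℝ, Complex.exp (θ * I) * z = ((‖z‖ / ‖w‖ : ℝ) : ℂ) * w := by
  refine ⟨w.arg - z.arg, ?_⟩
  have hw' : (‖w‖ : ℂ) ≠ 0 := by exact_mod_cast norm_ne_zero_iff.2 hw
  calc Complex.exp ((w.arg - z.arg : ℝ) * I) * z
      = Complex.exp ((w.arg - z.arg : ℝ) * I) * (‖z‖ * Complex.exp (z.arg * I)) := by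
        rw [norm_mul_exp_arg_mul_I]
    _ = ‖z‖ / ‖w‖ * (‖w‖ * Complex.exp (w.arg * I)) := by
        rw [← mul_assoc (_ / _), div_mul_cancel₀ _ hw', mul_left_comm, ← Complex.exp_add]
        push_cast; ring_nf
    _ = _ := by rw [norm_mul_exp_arg_mul_I]; push_cast; rfl

lemma b1_mul_self : b1 * b1 = -1 := by
  ext i j; fin_cases i <;> fin_cases j <;> simp [b1, Matrix.mul_apply, Fin.sum_univ_four]

lemma b4_mul_self : b4 * b4 = -1 := by
  ext i j; fin_cases i <;> fin_cases j <;> simp [b4, Matrix.mul_apply, Fin.sum_univ_four]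

def planePair (v : Fin 4 → ℝ) : ℂ × ℂ := (⟨v 0, v 1⟩, ⟨v 2, v 3⟩)

lemma planePair_injective : Function.Injective planePair := by
  intro v w h
  simp only [planePair, Prod.mk.injEq, Complex.mk.injEq] at h
  funext i; fin_cases i <;> simp [h]

lemma planePair_smul (c : ℝ) (v : Fin 4 → ℝ) : planePair (c • v) = c • planePair v := by
  refine Prod.ext (Complex.ext ?_ ?_) (Complex.ext ?_ ?_) <;> simp [planePair]

lemma planePair_exp_mul_exp_mulVec (a b : ℝ) (v : Fin 4 → ℝ) :
    planePair ((exp (a • b1) * exp (b • b4)) *ᵥ v) =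
      (Complex.exp ((a - b : ℝ) * Complex.I) * (planePair v).1,
        Complex.exp ((-(a + b) : ℝ) * Complex.I) * (planePair v).2) := by
  rw [exp_smul_of_mul_self_eq_neg_one b1_mul_self, exp_smul_of_mul_self_eq_neg_one b4_mul_self]
  refine Prod.ext (Complex.ext ?_ ?_) (Complex.ext ?_ ?_) <;>
    simp only [Complex.mul_re, Complex.mul_im, Complex.exp_ofReal_mul_I_re,
      Complex.exp_ofReal_mul_I_im] <;>
    simp [planePair, b1, b4, Matrix.mulVec, dotProduct, Fin.sum_univ_four, Matrix.mul_apply,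
      Real.cos_sub, Real.sin_sub, Real.cos_add, Real.sin_add] <;> ring

lemma norm_planePair_fst_eq_snd {v : Fin 4 → ℝ} (hv : Δsq v = 0) :
    ‖(planePair v).1‖ = ‖(planePair v).2‖ := by
  rw [Complex.norm_def, Complex.norm_def, planePair, Complex.normSq_mk, Complex.normSq_mk]
  unfold Δsq at hv
  congr 1; linarith

lemma planePair_fst_ne_zero {v : Fin 4 → ℝ} (hv : v ∈ B) : (planePair v).1 ≠ 0 := by
  obtain ⟨hv0, hΔ⟩ := hv
  contrapose! hv0
  have h2 := norm_planePair_fst_eq_snd hΔ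
  rw [hv0, norm_zero, eq_comm, norm_eq_zero] at h2
  simp only [planePair, Complex.ext_iff, Complex.zero_re, Complex.zero_im] at hv0 h2
  funext i; fin_cases i <;> simp [hv0, h2]

lemma planePair_snd_ne_zero {v : Fin 4 → ℝ} (hv : v ∈ B) : (planePair v).2 ≠ 0 := by
  rw [← norm_ne_zero_iff, ← norm_planePair_fst_eq_snd hv.2, norm_ne_zero_iff]
  exact planePair_fst_ne_zero hv

/-- The torus generated by `b₁` and `b₄` acts transitively on the projectivized BPS set. -/
theorem torus_transitive_on_projectivized_BPS :
    ∀ v ∈ B, ∀ w ∈ B, ∃ a b : ℝ, ∃ lam : ℝ, lam ≠ 0 ∧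
      (exp (a • b1) * exp (b • b4)).mulVec v = lam • w := by
  intro v hv w hw
  obtain ⟨θ₁, h₁⟩ := Complex.exists_exp_mul_I_mul_eq (z := (planePair v).1)
    (planePair_fst_ne_zero hw)
  obtain ⟨θ₂, h₂⟩ := Complex.exists_exp_mul_I_mul_eq (z := (planePair v).2)
    (planePair_snd_ne_zero hw)
  rw [← norm_planePair_fst_eq_snd hv.2, ← norm_planePair_fst_eq_snd hw.2] at h₂
  have hlam : ‖(planePair v).1‖ / ‖(planePair w).1‖ ≠ 0 :=
    div_ne_zero (norm_ne_zero_iff.2 (planePair_fst_ne_zero hv))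
      (norm_ne_zero_iff.2 (planePair_fst_ne_zero hw))
  refine ⟨(θ₁ - θ₂) / 2, -(θ₁ + θ₂) / 2, _, hlam, planePair_injective ?_⟩
  rw [planePair_exp_mul_exp_mulVec, planePair_smul, Prod.smul_mk, Complex.real_smul,
    Complex.real_smul, ← h₁, ← h₂]
  ring_nf
end
end

section
/- Conjugation of the charge matrix by the Weyl group element W := exp(−(π/2)·h₅) · exp((π/2)·(e₄₅ + f₄₅)) reverses the gravitational charges while fixing the electromagnetic ones: for all m,n,q,h ∈ ℝ, W · Q(m,n,q,h) · W⁻¹ = Q(−m,−n,q,h). -/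
open Matrix Complex

noncomputable section

/-- The signature-(2,1) metric `η`. -/
def η : Matrix (Fin 3) (Fin 3) ℂ := !![0,0,-1; 0,1,0; -1,0,0]

/-- The real Lie algebra `su(2,1) = {X : tr X = 0 and ηX + X†η = 0}` (as a set of matrices,
with the matrix commutator as bracket). -/
def su21 : Set (Matrix (Fin 3) (Fin 3) ℂ) := {X | X.trace = 0 ∧ η * X + Xᴴ * η = 0}

def h4 : Matrix (Fin 3) (Fin 3) ℂ := !![1,0,0; 0,0,0; 0,0,-1]
def h5 : Matrix (Fin 3) (Fin 3) ℂ := !![I,0,0; 0,-2*I,0; 0,0,I]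
def e4 : Matrix (Fin 3) (Fin 3) ℂ := !![0,1,0; 0,0,1; 0,0,0]
def e5 : Matrix (Fin 3) (Fin 3) ℂ := !![0,I,0; 0,0,-I; 0,0,0]
def e45 : Matrix (Fin 3) (Fin 3) ℂ := !![0,0,I; 0,0,0; 0,0,0]
def f4 : Matrix (Fin 3) (Fin 3) ℂ := !![0,0,0; 1,0,0; 0,1,0]
def f5 : Matrix (Fin 3) (Fin 3) ℂ := !![0,0,0; I,0,0; 0,-I,0]
def f45 : Matrix (Fin 3) (Fin 3) ℂ := !![0,0,0; 0,0,0; I,0,0]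
/-- The charge matrix `Q(m,n,q,h)`. -/
def Qc (m n q h : ℝ) : Matrix (Fin 3) (Fin 3) ℂ :=
  (-m : ℝ) • h4 + n • (e45 - f45) - (q / Real.sqrt 2) • (e4 - f4) + (h / Real.sqrt 2) • (e5 + f5)

/-- The Weyl group element `W = exp(−(π/2) h₅) · exp((π/2)(e₄₅ + f₄₅))`. -/
def W : Matrix (Fin 3) (Fin 3) ℂ :=
  NormedSpace.exp ((-(Real.pi/2) : ℝ) • h5) *
    NormedSpace.exp ((Real.pi/2 : ℝ) • (e45 + f45))

/-!
`h₅` is diagonal, and `e₄₅ + f₄₅` has eigenvalues `i, 0, -i` on the eigenvectors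
`(1,0,1), (0,1,0), (1,0,-1)`; exponentiating both gives `W = [[0,0,1],[0,-1,0],[1,0,0]]`,
an involution. Conjugation by `W` exchanges the first and third basis vectors and negates the
second, so on the generators it acts as `h₄ ↦ -h₄`, `e₄₅ ↔ f₄₅`, `e₄ ↔ -f₄`, `e₅ ↔ f₅`.
-/

lemma h5_eq_diagonal : h5 = diagonal ![I, -2 * I, I] := by
  ext i j; fin_cases i <;> fin_cases j <;> simp [h5]

lemma exp_smul_h5 : NormedSpace.exp ((-(Real.pi / 2) : ℝ) • h5) = diagonal ![-I, -1, -I] := by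
  have h : cexp (Real.pi / 2 * (2 * I)) = -1 := by
    rw [← exp_pi_mul_I]; ring_nf
  rw [h5_eq_diagonal, ← diagonal_smul, Matrix.exp_diagonal]
  congr 1
  ext i; fin_cases i <;> simp [← Complex.exp_eq_exp_ℂ, Complex.exp_neg, exp_pi_div_two_mul_I, h]

def e45AddF45Eigenbasis : (Matrix (Fin 3) (Fin 3) ℂ)ˣ where
  val := !![1, 0, 1; 0, 1, 0; 1, 0, -1]
  inv := !![1/2, 0, 1/2; 0, 1, 0; 1/2, 0, -1/2]
  val_inv := by
    ext i j; fin_cases i <;> fin_cases j <;>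
      simp [Matrix.mul_apply, Fin.sum_univ_three] <;> norm_num
  inv_val := by
    ext i j; fin_cases i <;> fin_cases j <;>
      simp [Matrix.mul_apply, Fin.sum_univ_three] <;> norm_num

lemma smul_e45_add_f45_eq_conj : (Real.pi / 2 : ℝ) • (e45 + f45) =
    e45AddF45Eigenbasis * diagonal ![Real.pi / 2 * I, 0, -(Real.pi / 2 * I)] *
      e45AddF45Eigenbasis⁻¹ := by
  rw [Units.eq_mul_inv_iff_mul_eq]
  ext i j; fin_cases i <;> fin_cases j <;>
    simp [e45AddF45Eigenbasis, e45, f45, Matrix.mul_apply, Fin.sum_univ_three]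

lemma exp_smul_e45_add_f45 :
    NormedSpace.exp ((Real.pi / 2 : ℝ) • (e45 + f45)) = !![0, 0, I; 0, 1, 0; I, 0, 0] := by
  have h : NormedSpace.exp ![Real.pi / 2 * I, 0, -(Real.pi / 2 * I)] = ![I, 1, -I] := by
    ext i; fin_cases i <;>
      simp [← Complex.exp_eq_exp_ℂ, Complex.exp_neg, exp_pi_div_two_mul_I]
  rw [smul_e45_add_f45_eq_conj, Matrix.exp_units_conj, Matrix.exp_diagonal, h]
  ext i j; fin_cases i <;> fin_cases j <;>
    simp [e45AddF45Eigenbasis, Matrix.mul_apply, Fin.sum_univ_three, vecMul_diagonal]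
  all_goals ring

lemma W_eq : W = !![0, 0, 1; 0, -1, 0; 1, 0, 0] := by
  rw [W, exp_smul_h5, exp_smul_e45_add_f45]
  ext i j; fin_cases i <;> fin_cases j <;> simp [Matrix.mul_apply, Fin.sum_univ_three]

lemma W_mul_W : W * W = 1 := by
  rw [W_eq]
  ext i j; fin_cases i <;> fin_cases j <;> simp [Matrix.mul_apply, Fin.sum_univ_three]

lemma inv_W : W⁻¹ = W := Matrix.inv_eq_right_inv W_mul_W

lemma W_mul_h4_mul_W : W * h4 * W = -h4 := by
  rw [W_eq]
  ext i j; fin_cases i <;> fin_cases j <;>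
    simp [h4, Matrix.mul_apply, Fin.sum_univ_three]

lemma W_mul_e45_mul_W : W * e45 * W = f45 := by
  rw [W_eq]
  ext i j; fin_cases i <;> fin_cases j <;>
    simp [e45, f45, Matrix.mul_apply, Fin.sum_univ_three]

lemma W_mul_f45_mul_W : W * f45 * W = e45 := by
  rw [W_eq]
  ext i j; fin_cases i <;> fin_cases j <;>
    simp [e45, f45, Matrix.mul_apply, Fin.sum_univ_three]

lemma W_mul_e4_mul_W : W * e4 * W = -f4 := by
  rw [W_eq]
  ext i j; fin_cases i <;> fin_cases j <;>
    simp [e4, f4, Matrix.mul_apply, Fin.sum_univ_three]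

lemma W_mul_f4_mul_W : W * f4 * W = -e4 := by
  rw [W_eq]
  ext i j; fin_cases i <;> fin_cases j <;>
    simp [e4, f4, Matrix.mul_apply, Fin.sum_univ_three]

lemma W_mul_e5_mul_W : W * e5 * W = f5 := by
  rw [W_eq]
  ext i j; fin_cases i <;> fin_cases j <;>
    simp [e5, f5, Matrix.mul_apply, Fin.sum_univ_three]

lemma W_mul_f5_mul_W : W * f5 * W = e5 := by
  rw [W_eq]
  ext i j; fin_cases i <;> fin_cases j <;>
    simp [e5, f5, Matrix.mul_apply, Fin.sum_univ_three]

/-- Conjugation of the charge matrix by `W` reverses the gravitational charges `(m,n)` and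
fixes the electromagnetic charges `(q,h)`. -/
theorem weyl_action_on_charges :
    ∀ m n q h : ℝ, W * Qc m n q h * W⁻¹ = Qc (-m) (-n) q h := by
  intro m n q h
  rw [inv_W]
  simp only [Qc, mul_add, add_mul, mul_sub, sub_mul, Matrix.mul_smul, Matrix.smul_mul,
    W_mul_h4_mul_W, W_mul_e45_mul_W, W_mul_f45_mul_W, W_mul_e4_mul_W, W_mul_f4_mul_W,
    W_mul_e5_mul_W, W_mul_f5_mul_W]
  module
end
end
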